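/- Let θ ∈ (0,1). Define the buyer's ex-post payoff u_B(ω, e) for ω ∈ [0,1] and e ∈ [−2θ, 2θ] by: u_B(ω,e) = ω − (θ·ω + e) if 0 ≤ e ≤ θ − θ·ω; u_B(ω,e) = ω − θ if θ − θ·ω < e ≤ 2θ; and u_B(ω,e) = 0 if e < 0. Then the buyer's ex-ante expected payoff satisfies Π_B(θ) = ∫₀¹ ∫_{−2θ}^{2θ} u_B(ω,e) · (1/(4θ)) de dω = (6 − 11θ)/24. -/

import Mathlib

/-!
For fixed `ω` the payoff vanishes for `e < 0`, is affine in `e` up to the kink `θ(1 - ω)` and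
constant beyond it, so the inner integral is a quadratic polynomial in `ω`, which is then
integrated over `[0, 1]`.
-/

open intervalIntegral

/-- Buyer's ex-post payoff: `ω - (θω + e)` in the under-budget region
`0 ≤ e ≤ θ - θω`, `ω - θ` in the budget-capped region `θ - θω < e`,
and `0` (no trade) when `e < 0`. -/
noncomputable def uB (θ ω e : ℝ) : ℝ :=
  if e < 0 then 0
  else if e ≤ θ - θ * ω then ω - (θ * ω + e)
  else ω - θ

open Set

theorem intervalIntegral.integral_eq_add_add_of_eqOn_uIoo {E : Type*} [NormedAddCommGroup E]
    [NormedSpace ℝ E] {μ : MeasureTheory.Measure ℝ} [MeasureTheory.NullSingletonClass μ]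
    {f g₁ g₂ g₃ : ℝ → E} {a b c d : ℝ}
    (hg₁ : IntervalIntegrable g₁ μ a b) (hg₂ : IntervalIntegrable g₂ μ b c)
    (hg₃ : IntervalIntegrable g₃ μ c d) (hfg₁ : EqOn f g₁ (uIoo a b))
    (hfg₂ : EqOn f g₂ (uIoo b c)) (hfg₃ : EqOn f g₃ (uIoo c d)) :
    ∫ x in a..d, f x ∂μ =
      (∫ x in a..b, g₁ x ∂μ) + (∫ x in b..c, g₂ x ∂μ) + ∫ x in c..d, g₃ x ∂μ := by
  have hf₁ := hg₁.congr_uIoo hfg₁.symm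
  have hf₂ := hg₂.congr_uIoo hfg₂.symm
  have hf₃ := hg₃.congr_uIoo hfg₃.symm
  rw [← integral_add_adjacent_intervals (hf₁.trans hf₂) hf₃,
    ← integral_add_adjacent_intervals hf₁ hf₂, integral_congr_uIoo hfg₁,
    integral_congr_uIoo hfg₂, integral_congr_uIoo hfg₃]

section

variable {θ ω e : ℝ}

theorem uB_of_neg (he : e < 0) : uB θ ω e = 0 := if_pos he

theorem uB_of_mem_Icc (he : e ∈ Icc 0 (θ - θ * ω)) : uB θ ω e = ω - θ * ω - e := by
  rw [uB, if_neg he.1.not_gt, if_pos he.2]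
  ring

theorem uB_of_gt (h : 0 ≤ θ - θ * ω) (he : θ - θ * ω < e) : uB θ ω e = ω - θ := by
  rw [uB, if_neg (h.trans_lt he).not_gt, if_neg he.not_ge]

theorem integral_uB (hθ : 0 ≤ θ) (hω : ω ∈ Icc (0 : ℝ) 1) :
    ∫ e in (-(2 * θ))..(2 * θ), uB θ ω e = θ * (θ * ω ^ 2 + 2 * (2 - θ) * ω - 3 * θ) / 2 := by
  have ha₀ : 0 ≤ θ - θ * ω := by nlinarith [hω.2]
  have ha₂ : θ - θ * ω ≤ 2 * θ := by nlinarith [hω.1]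
  rw [integral_eq_add_add_of_eqOn_uIoo (g₁ := fun _ => 0) (g₂ := fun e => ω - θ * ω - e)
    (g₃ := fun _ => ω - θ) (b := 0) (c := θ - θ * ω) intervalIntegrable_const
    (intervalIntegrable_const.sub intervalIntegrable_id) intervalIntegrable_const]
  · rw [integral_zero, integral_sub intervalIntegrable_const intervalIntegrable_id, integral_id,
      integral_const, integral_const, smul_eq_mul, smul_eq_mul]
    ring
  · intro e he
    rw [uIoo_of_le (by linarith)] at he
    exact uB_of_neg he.2
  · intro e he
    rw [uIoo_of_le ha₀] at he
    exact uB_of_mem_Icc (Ioo_subset_Icc_self he)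
  · intro e he
    rw [uIoo_of_le ha₂] at he
    exact uB_of_gt ha₀ he.1

end

/-- Proposition (Buyer's Payoff Under Minimal Separation): with type
`ω ~ U(0,1)` and payment error `e ~ U(-2θ, 2θ)` (density `1/(4θ)`), the
buyer's ex-ante expected payoff equals `(6 - 11θ)/24`. -/
theorem buyer_payoff_minimal_separation (θ : ℝ) (hθ : θ ∈ Set.Ioo (0 : ℝ) 1) :
    ∫ ω in (0 : ℝ)..1, ∫ e in (-(2 * θ))..(2 * θ), uB θ ω e * (1 / (4 * θ)) =
      (6 - 11 * θ) / 24 := by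
  obtain ⟨hθ₀, -⟩ := hθ
  calc ∫ ω in (0 : ℝ)..1, ∫ e in (-(2 * θ))..(2 * θ), uB θ ω e * (1 / (4 * θ))
      = ∫ ω in (0 : ℝ)..1, (θ * ω ^ 2 + 2 * (2 - θ) * ω - 3 * θ) / 8 := by
        refine integral_congr fun ω hω => ?_
        rw [uIcc_of_le zero_le_one] at hω
        rw [integral_mul_const, integral_uB hθ₀.le hω]
        field_simp
        ring
    _ = (6 - 11 * θ) / 24 := by
        have hint : ∀ f : ℝ → ℝ, Continuous f → IntervalIntegrable f MeasureTheory.volume 0 1 :=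
          fun f hf => hf.intervalIntegrable 0 1
        rw [integral_div, integral_sub (hint _ (by fun_prop)) (hint _ (by fun_prop)),
          integral_add (hint _ (by fun_prop)) (hint _ (by fun_prop)), integral_const_mul,
          integral_const_mul, integral_pow, integral_id, integral_const, smul_eq_mul]
        ring
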